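/- arXiv:cs/0610086 — 6 statements merged into one kernel-verified Lean document; each statement's English description precedes it below -/
import Mathlib

section
/- Let G be a finite group, H ≤ G a subgroup, and u ∈ G. Then the set K = (H × u⁻¹Hu × {0}) ∪ (u⁻¹H × Hu × {1}) is a subgroup of the wreath product G ≀ ℤ₂. -/
/-- Multiplication of the wreath product `G ≀ ℤ₂` on `G × G × ZMod 2`. -/
def wmul {G : Type*} [Group G] (x y : G × G × ZMod 2) : G × G × ZMod 2 :=
  if y.2.2 = 0 then (x.1 * y.1, x.2.1 * y.2.1, x.2.2 + y.2.2)
  else (x.2.1 * y.1, x.1 * y.2.1, x.2.2 + y.2.2)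

/-- Inversion in the wreath product `G ≀ ℤ₂`. -/
def winv {G : Type*} [Group G] (x : G × G × ZMod 2) : G × G × ZMod 2 :=
  if x.2.2 = 0 then (x.1⁻¹, x.2.1⁻¹, -x.2.2) else (x.2.1⁻¹, x.1⁻¹, -x.2.2)


/-- The set `K = (H × u⁻¹Hu × {0}) ∪ (u⁻¹H × Hu × {1})` inside `G ≀ ℤ₂`. -/
def Kset {G : Type*} [Group G] (H : Subgroup G) (u : G) : Set (G × G × ZMod 2) :=
  {x | (x.2.2 = 0 ∧ x.1 ∈ H ∧ u * x.2.1 * u⁻¹ ∈ H) ∨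
       (x.2.2 = 1 ∧ u * x.1 ∈ H ∧ x.2.1 * u⁻¹ ∈ H)}

/-- For a subgroup `H ≤ G` and `u ∈ G`, the set
`K = (H × u⁻¹Hu × {0}) ∪ (u⁻¹H × Hu × {1})` is a subgroup of the wreath product `G ≀ ℤ₂`:
it contains the identity and is closed under multiplication and inversion. -/
theorem stmt1 {G : Type*} [Group G] [Fintype G] (H : Subgroup G) (u : G) :
    ((1, 1, 0) : G × G × ZMod 2) ∈ Kset H u ∧
    (∀ x ∈ Kset H u, ∀ y ∈ Kset H u, wmul x y ∈ Kset H u) ∧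
    (∀ x ∈ Kset H u, winv x ∈ Kset H u) := by
  have h10 : (1 : ZMod 2) ≠ 0 := by decide
  refine ⟨Or.inl ⟨rfl, by simpa using H.one_mem, by simpa using H.one_mem⟩, ?_, ?_⟩
  · rintro ⟨a, b, z⟩ (⟨hz, ha, hb⟩ | ⟨hz, ha, hb⟩) ⟨c, d, w⟩ (⟨hw, hc, hd⟩ | ⟨hw, hc, hd⟩) <;>
      subst hz <;> subst hw
    · refine Or.inl ⟨rfl, ?_, ?_⟩
      · simpa [wmul] using H.mul_mem ha hc
      · simpa [wmul, mul_assoc] using H.mul_mem hb hd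
    · refine Or.inr ⟨by simp [wmul, h10], ?_, ?_⟩
      · simpa [wmul, h10, mul_assoc] using H.mul_mem hb hc
      · simpa [wmul, h10, mul_assoc] using H.mul_mem ha hd
    · refine Or.inr ⟨by simp [wmul], ?_, ?_⟩
      · simpa [wmul, mul_assoc] using H.mul_mem ha hc
      · simpa [wmul, mul_assoc] using H.mul_mem hb hd
    · refine Or.inl ⟨by simp [wmul, h10]; decide, ?_, ?_⟩
      · simpa [wmul, h10, mul_assoc] using H.mul_mem hb hc
      · simpa [wmul, h10, mul_assoc] using H.mul_mem ha hd
  · rintro ⟨a, b, z⟩ (⟨hz, ha, hb⟩ | ⟨hz, ha, hb⟩) <;> subst hz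
    · refine Or.inl ⟨by simp [winv], ?_, ?_⟩
      · simpa [winv] using H.inv_mem ha
      · simpa [winv, mul_assoc] using H.inv_mem hb
    · refine Or.inr ⟨by simp [winv, h10], ?_, ?_⟩
      · simpa [winv, h10] using H.inv_mem hb
      · simpa [winv, h10] using H.inv_mem ha
end

section
/- Let G be a finite group, f₁, f₂ : G → S functions with shift set Hu (H a subgroup, u a shift). Define f : G ≀ ℤ₂ → S × S by f(g₁,g₂,0) = (f₁(g₁), f₂(g₂)) and f(g₁,g₂,1) = (f₂(g₂), f₁(g₁)). Then f is constant on each left coset of K = (H × u⁻¹Hu × {0}) ∪ (u⁻¹H × Hu × {1}) in G ≀ ℤ₂. -/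
/-- The function `f : G ≀ ℤ₂ → S × S` built from `f₁, f₂`:
`f(g₁,g₂,0) = (f₁ g₁, f₂ g₂)` and `f(g₁,g₂,1) = (f₂ g₂, f₁ g₁)`. -/
def hidec {G S : Type*} [Group G] (f₁ f₂ : G → S) (x : G × G × ZMod 2) : S × S :=
  if x.2.2 = 0 then (f₁ x.1, f₂ x.2.1) else (f₂ x.2.1, f₁ x.1)

/-- If the set of shifts of `f₁, f₂` is exactly `Hu` and `f₁` is constant on
left cosets of `H`, then `f = hidec f₁ f₂` is constant on each left coset of
`K = (H × u⁻¹Hu × {0}) ∪ (u⁻¹H × Hu × {1})` in `G ≀ ℤ₂`. -/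
theorem stmt3 {G S : Type*} [Group G] [Fintype G] (f₁ f₂ : G → S) (H : Subgroup G) (u : G)
    (hshift : {v : G | ∀ g, f₁ g = f₂ (g * v)} = {v : G | ∃ h ∈ H, v = h * u})
    (hconst : ∀ g : G, ∀ h ∈ H, f₁ (g * h) = f₁ g) :
    ∀ x : G × G × ZMod 2, ∀ k ∈ Kset H u, hidec f₁ f₂ (wmul x k) = hidec f₁ f₂ x := by
  have hu : ∀ g, f₁ g = f₂ (g * u) := by
    have hmem : u ∈ {v : G | ∀ g, f₁ g = f₂ (g * v)} := by
      rw [hshift]; exact ⟨1, H.one_mem, by simp⟩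
    exact hmem
  have f2f1 : ∀ g, f₂ g = f₁ (g * u⁻¹) := fun g => by
    simpa using (hu (g * u⁻¹)).symm
  -- f₂ is constant on left cosets of u⁻¹Hu
  have f2const : ∀ g h', u * h' * u⁻¹ ∈ H → f₂ (g * h') = f₂ g := by
    intro g h' hh'
    rw [f2f1, f2f1 g]
    have : g * h' * u⁻¹ = (g * u⁻¹) * (u * h' * u⁻¹) := by group
    rw [this, hconst _ _ hh']
  have factA : ∀ g b, b * u⁻¹ ∈ H → f₂ (g * b) = f₁ g := by
    intro g b hb
    rw [f2f1, mul_assoc, hconst _ _ hb]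
  have factB : ∀ g a, u * a ∈ H → f₁ (g * a) = f₂ g := by
    intro g a ha
    have : g * a = (g * u⁻¹) * (u * a) := by group
    rw [this, hconst _ _ ha, ← f2f1]
  rintro ⟨x1, x2, x3⟩ ⟨k1, k2, k3⟩ hk
  rcases hk with ⟨hk0, h1, h2⟩ | ⟨hk1, h1, h2⟩
  · simp only at hk0 h1 h2
    subst hk0
    simp only [wmul, hidec, if_pos rfl, add_zero]
    fin_cases x3 <;> simp [hconst _ _ h1, f2const _ _ h2]
  · simp only at hk1 h1 h2
    subst hk1
    simp only [wmul, hidec]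
    have e1 : (1 : ZMod 2) + 1 = 0 := rfl
    have e0 : (0 : ZMod 2) + 1 = 1 := rfl
    fin_cases x3 <;>
      simp [e0, e1, factA _ _ h2, factB _ _ h1] <;> rfl
end

section
/- Let G be a finite group, f₁, f₂ : G → S functions such that the set of shifts is exactly Hu for a subgroup H ≤ G and u ∈ G, and such that f₁ is constant on each left coset gH and takes distinct values on distinct left cosets of H. Define f : G ≀ ℤ₂ → S × S as f(g₁,g₂,0) = (f₁(g₁), f₂(g₂)), f(g₁,g₂,1) = (f₂(g₂), f₁(g₁)). Then f takes distinct values on distinct left cosets of K = (H × u⁻¹Hu × {0}) ∪ (u⁻¹H × Hu × {1}), i.e., f(x) = f(y) implies x⁻¹y ∈ K, equivalently xK = yK. -/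
/-- If the set of shifts of `f₁, f₂` is exactly `Hu`, and `f₁` is constant on
left cosets of `H` with distinct values on distinct left cosets, then `f = hidec f₁ f₂`
takes distinct values on distinct left cosets of `K`: `f x = f y` implies `x⁻¹y ∈ K`. -/
theorem stmt4 {G S : Type*} [Group G] [Fintype G] (f₁ f₂ : G → S) (H : Subgroup G) (u : G)
    (hshift : {v : G | ∀ g, f₁ g = f₂ (g * v)} = {v : G | ∃ h ∈ H, v = h * u})
    (hconst : ∀ g : G, ∀ h ∈ H, f₁ (g * h) = f₁ g)
    (hdist : ∀ a b : G, f₁ a = f₁ b → a⁻¹ * b ∈ H) :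
    ∀ x y : G × G × ZMod 2, hidec f₁ f₂ x = hidec f₁ f₂ y → wmul (winv x) y ∈ Kset H u := by
  have hu : ∀ g, f₁ g = f₂ (g * u) := by
    have : u ∈ {v : G | ∃ h ∈ H, v = h * u} := ⟨1, H.one_mem, (one_mul u).symm⟩
    rw [← hshift] at this; exact this
  have hf2 : ∀ a : G, f₂ a = f₁ (a * u⁻¹) := by
    intro a; rw [hu (a * u⁻¹)]; simp
  -- cross lemma: f₁ a = f₂ b → a⁻¹ * b * u⁻¹ ∈ H
  have hcross : ∀ a b : G, f₁ a = f₂ b → a⁻¹ * (b * u⁻¹) ∈ H := by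
    intro a b h; exact hdist _ _ (by rw [h, hf2])
  have hf2eq : ∀ a b : G, f₂ a = f₂ b → (a * u⁻¹)⁻¹ * (b * u⁻¹) ∈ H := by
    intro a b h; exact hdist _ _ (by rw [← hf2, ← hf2, h])
  rintro ⟨a₁, a₂, ε⟩ ⟨b₁, b₂, δ⟩ heq
  rcases (by decide : ∀ e : ZMod 2, e = 0 ∨ e = 1) ε with rfl | rfl <;>
    rcases (by decide : ∀ e : ZMod 2, e = 0 ∨ e = 1) δ with rfl | rfl <;>
    simp only [hidec, wmul, winv, Kset, Set.mem_setOf_eq, Prod.mk.injEq] at heq ⊢ <;>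
    norm_num at heq ⊢
  · exact ⟨hdist _ _ heq.1, by simpa [mul_assoc] using hf2eq _ _ heq.2⟩
  · exact ⟨by simpa [mul_assoc] using hdist (a₂ * u⁻¹) b₁ (by rw [← hf2]; exact heq.2),
      by simpa [mul_assoc] using hcross _ _ heq.1⟩
  · refine ⟨by decide, ?_, ?_⟩
    · simpa [mul_assoc] using hdist (a₂ * u⁻¹) b₁ (by rw [← hf2]; exact heq.1)
    · simpa [mul_assoc] using hcross _ _ heq.2
  · exact ⟨hdist _ _ heq.2, by simpa [mul_assoc] using hf2eq _ _ heq.1⟩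
end

section
/- Let G be a group and H a subgroup hidden by f : G → S (f constant on left cosets of H and distinct across distinct left cosets). For subgroups G₁,…,G_k ≤ G, define f' : G × G₁ × ⋯ × G_k → S × G^k by f'(g, g₁, …, g_k) = (f(g), g·g₁⁻¹, …, g·g_k⁻¹). Then f' is constant on left cosets of the diagonal subgroup D = {(g,g,…,g) : g ∈ H ∩ G₁ ∩ ⋯ ∩ G_k} and takes distinct values on distinct left cosets of D. -/
/-! The equation `g·gᵢ⁻¹ = g'·gᵢ'⁻¹` says exactly `gᵢ⁻¹·gᵢ' = g⁻¹·g'`, and since `gᵢ, gᵢ' ∈ Gᵢ`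
this forces `g⁻¹·g' ∈ Gᵢ`; the first coordinate contributes `g⁻¹·g' ∈ H` because `f` hides `H`. -/

theorem mul_inv_eq_mul_inv_iff_inv_mul_eq_inv_mul {G : Type*} [Group G] (g g' a b : G) :
    g * a⁻¹ = g' * b⁻¹ ↔ a⁻¹ * b = g⁻¹ * g' := by
  constructor <;> intro h
  · calc a⁻¹ * b = g⁻¹ * (g * a⁻¹) * b := by group
      _ = g⁻¹ * g' := by rw [h]; group
  · calc g * a⁻¹ = g' * (g⁻¹ * g')⁻¹ * a⁻¹ := by group
      _ = g' * b⁻¹ := by rw [← h]; group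

theorem Subgroup.mem_of_inv_mul_eq {G : Type*} [Group G] {K : Subgroup G} {a b x : G}
    (ha : a ∈ K) (hb : b ∈ K) (h : a⁻¹ * b = x) : x ∈ K :=
  h ▸ K.mul_mem (K.inv_mem ha) hb

theorem stmt5_general {G S : Type*} [Group G] (k : ℕ) (H : Subgroup G)
    (Gs : Fin k → Subgroup G) (f : G → S)
    (hf : ∀ x y : G, f x = f y ↔ x⁻¹ * y ∈ H) :
    ∀ (g g' : G) (v v' : Fin k → G),
      (∀ i, v i ∈ Gs i) → (∀ i, v' i ∈ Gs i) →
      ((f g = f g' ∧ ∀ i, g * (v i)⁻¹ = g' * (v' i)⁻¹) ↔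
        (g⁻¹ * g' ∈ H ∧ (∀ i, g⁻¹ * g' ∈ Gs i) ∧ ∀ i, (v i)⁻¹ * v' i = g⁻¹ * g')) := by
  intro g g' v v' hv hv'
  simp only [hf, mul_inv_eq_mul_inv_iff_inv_mul_eq_inv_mul]
  refine and_congr_right fun _ => ⟨fun hcoset => ⟨fun i => ?_, hcoset⟩, And.right⟩
  exact Subgroup.mem_of_inv_mul_eq (hv i) (hv' i) (hcoset i)

/-- If `f` hides `H ≤ G` (i.e. `f x = f y ↔ x⁻¹y ∈ H`), then the function
`f'(g, g₁, …, g_k) = (f g, g·g₁⁻¹, …, g·g_k⁻¹)` on the direct product `G × G₁ × ⋯ × G_k`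
(elements `(g, v)` with `v i ∈ Gᵢ`) hides the diagonal subgroup
`D = {(g,…,g) : g ∈ H ∩ G₁ ∩ ⋯ ∩ G_k}`: two elements have equal `f'`-values iff their
quotient lies in `D`. -/
theorem stmt5 {G S : Type*} [Group G] [Fintype G] (k : ℕ) (H : Subgroup G)
    (Gs : Fin k → Subgroup G) (f : G → S)
    (hf : ∀ x y : G, f x = f y ↔ x⁻¹ * y ∈ H) :
    ∀ (g g' : G) (v v' : Fin k → G),
      (∀ i, v i ∈ Gs i) → (∀ i, v' i ∈ Gs i) →
      ((f g = f g' ∧ ∀ i, g * (v i)⁻¹ = g' * (v' i)⁻¹) ↔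
        (g⁻¹ * g' ∈ H ∧ (∀ i, g⁻¹ * g' ∈ Gs i) ∧ ∀ i, (v i)⁻¹ * v' i = g⁻¹ * g')) :=
  stmt5_general k H Gs f hf
end

section
/- Let G be a finite group, n ≥ 2, and f₁,…,fₙ : G → S injective functions such that there exists u ∈ G with f_i(g) = f_{i+1}(ug) for all g ∈ G and 1 ≤ i ≤ n-1. Define f : G ≀ ℤₙ → Sⁿ by f(g₁,…,gₙ,τ) = (f_{τ(1)}(g₁), …, f_{τ(n)}(gₙ)). Then f is constant on each right coset of the cyclic subgroup H generated by h = (u, u, …, u, u^{1-n}, 1), and f takes distinct values on distinct right cosets of H. -/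
/-- Multiplication of the wreath product `G ≀ ℤₙ` on `(ZMod n → G) × ZMod n`:
`(g,τ)∘(g',τ') = (fun i => g (i + τ') * g' i, τ + τ')`, i.e. component `i` of the product is
`g_{τ'(i)} g_i'` where `τ'` shifts indices cyclically. -/
def wmuln {G : Type*} [Group G] {n : ℕ} (x y : (ZMod n → G) × ZMod n) :
    (ZMod n → G) × ZMod n :=
  (fun i => x.1 (i + y.2) * y.1 i, x.2 + y.2)

/-- Natural powers with respect to `wmuln`. -/
def wpow {G : Type*} [Group G] {n : ℕ} (x : (ZMod n → G) × ZMod n) :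
    ℕ → (ZMod n → G) × ZMod n
  | 0 => (fun _ => 1, 0)
  | m + 1 => wmuln (wpow x m) x

/-- The element `(u, u, …, u, u^{1-n}, 1)` of `G ≀ ℤₙ` (coordinates `1,…,n-1` equal `u`,
coordinate `n ≡ 0` equal to `u^{1-n}`, last component `1 ∈ ZMod n`). -/
def helt {G : Type*} [Group G] (n : ℕ) (u : G) : (ZMod n → G) × ZMod n :=
  (fun i => if i = 0 then u ^ (1 - (n : ℤ)) else u, 1)

/-- The function `f : G ≀ ℤₙ → Sⁿ` given by `f(g₁,…,gₙ,τ) = (f_{τ(1)}(g₁), …, f_{τ(n)}(gₙ))`,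
where `τ(i) = i + τ` and the functions are indexed by `ZMod n` (index `n` is `0`). -/
def fw {G S : Type*} {n : ℕ} (fs : ZMod n → G → S) (x : (ZMod n → G) × ZMod n) : ZMod n → S :=
  fun i => fs (i + x.2) (x.1 i)


/-!
Left multiplication by `h` raises `τ` by one and multiplies coordinate `i` by `u`, except at the
coordinate that wraps around to index `n`, where it multiplies by `u^{1-n}`. The shift relation
`f_i(g) = f_{i+1}(ug)` compensates exactly for the first kind of step, and chaining it `n - 1` times
gives `f_1(u^{1-n} g) = f_n(g)`, which compensates for the second. So `f` is invariant under
left multiplication by `h`, i.e. constant on right cosets of `H`. Conversely, if `f x = f y`,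
some `h^m x` has the same `τ` as `y` and the same `f`-value, and for a fixed `τ` the map `f` is
injective because every `f_i` is.
-/

section WreathProduct

variable {G S : Type*} {n : ℕ} {fs : ZMod n → G → S}

theorem eq_of_fw_eq (hinj : ∀ i, Function.Injective (fs i)) {x y : (ZMod n → G) × ZMod n}
    (hsnd : x.2 = y.2) (hfw : fw fs x = fw fs y) : x = y := by
  refine Prod.ext (funext fun i => hinj (i + y.2) ?_) hsnd
  simpa only [fw, hsnd] using congrFun hfw i

variable [Group G]

theorem wmuln_assoc (a b c : (ZMod n → G) × ZMod n) :
    wmuln (wmuln a b) c = wmuln a (wmuln b c) := by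
  refine Prod.ext (funext fun i => ?_) (add_assoc _ _ _)
  simp only [wmuln, mul_assoc, add_right_comm i c.2 b.2, add_assoc i]

theorem wpow_zero_wmuln (x y : (ZMod n → G) × ZMod n) : wmuln (wpow x 0) y = y :=
  Prod.ext (funext fun _ => one_mul _) (zero_add _)

theorem wpow_snd (x : (ZMod n → G) × ZMod n) (m : ℕ) : (wpow x m).2 = m • x.2 := by
  induction m with
  | zero => exact (zero_nsmul _).symm
  | succ m ih => exact (congrArg (· + x.2) ih).trans (succ_nsmul _ _).symm

theorem snd_wpow_val_sub_wmuln [NeZero n] {h : (ZMod n → G) × ZMod n} (hh : h.2 = 1)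
    (x y : (ZMod n → G) × ZMod n) : (wmuln (wpow h (y.2 - x.2).val) x).2 = y.2 := by
  change (wpow h _).2 + x.2 = y.2
  rw [wpow_snd, hh, nsmul_one, ZMod.natCast_zmod_val, sub_add_cancel]

theorem fw_wmuln_wpow {h : (ZMod n → G) × ZMod n}
    (hh : ∀ x, fw fs (wmuln h x) = fw fs x) (m : ℕ) (x : (ZMod n → G) × ZMod n) :
    fw fs (wmuln (wpow h m) x) = fw fs x := by
  induction m generalizing x with
  | zero => rw [wpow_zero_wmuln]
  | succ m ih => rw [wpow, wmuln_assoc, ih, hh]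

variable {u : G} (hshift : ∀ i : ZMod n, i ≠ 0 → ∀ g, fs i g = fs (i + 1) (u * g))
include hshift

theorem fs_one_eq_fs_one_add_natCast {k : ℕ} (hk : k < n) (g : G) :
    fs 1 g = fs (1 + k) (u ^ k * g) := by
  induction k generalizing g with
  | zero => simp
  | succ k ih =>
    have hne : (1 : ZMod n) + k ≠ 0 := by
      rw [add_comm, ← Nat.cast_succ, Ne, ZMod.natCast_eq_zero_iff]
      exact fun hdvd => absurd (Nat.le_of_dvd k.succ_pos hdvd) (by omega)
    rw [ih (by omega), hshift _ hne, pow_succ', mul_assoc]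
    push_cast
    rw [add_assoc]

theorem fs_one_zpow_mul [NeZero n] (g : G) : fs 1 (u ^ (1 - (n : ℤ)) * g) = fs 0 g := by
  have hn : 1 ≤ n := NeZero.one_le
  have hidx : (1 : ZMod n) + ((n - 1 : ℕ) : ZMod n) = 0 := by
    rw [Nat.cast_sub hn, Nat.cast_one, ZMod.natCast_self, add_sub_cancel]
  have hpow : u ^ (n - 1) * (u ^ (1 - (n : ℤ)) * g) = g := by
    rw [← mul_assoc, ← zpow_natCast, ← zpow_add, Nat.cast_sub hn, Nat.cast_one,
      sub_add_sub_cancel', sub_self, zpow_zero, one_mul]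
  rw [fs_one_eq_fs_one_add_natCast hshift (Nat.sub_one_lt (NeZero.ne n)), hidx, hpow]

theorem fw_wmuln_helt [NeZero n] (x : (ZMod n → G) × ZMod n) :
    fw fs (wmuln (helt n u) x) = fw fs x := by
  funext i
  change fs (i + (1 + x.2)) ((if i + x.2 = 0 then u ^ (1 - (n : ℤ)) else u) * x.1 i)
    = fs (i + x.2) (x.1 i)
  rw [add_left_comm, add_comm 1]
  split_ifs with hi
  · rw [hi, zero_add, fs_one_zpow_mul hshift]
  · rw [← hshift _ hi]

end WreathProduct

theorem stmt8_general {G S : Type*} [Group G] (n : ℕ) (hn : 2 ≤ n)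
    (fs : ZMod n → G → S) (hinj : ∀ i, Function.Injective (fs i)) (u : G)
    (hshift : ∀ i : ZMod n, i ≠ 0 → ∀ g, fs i g = fs (i + 1) (u * g)) :
    (∀ (x : (ZMod n → G) × ZMod n) (m : ℕ),
        fw fs (wmuln (wpow (helt n u) m) x) = fw fs x) ∧
    (∀ x y : (ZMod n → G) × ZMod n,
        fw fs x = fw fs y → ∃ m : ℕ, y = wmuln (wpow (helt n u) m) x) := by
  have : NeZero n := ⟨by omega⟩
  have hinv := fw_wmuln_wpow (fw_wmuln_helt hshift)
  refine ⟨fun x m => hinv m x, fun x y hxy => ⟨(y.2 - x.2).val, ?_⟩⟩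
  refine (eq_of_fw_eq hinj (snd_wpow_val_sub_wmuln rfl x y) ?_).symm
  rw [hinv, hxy]

/-- Given injective `f₁,…,fₙ` (indexed by `ZMod n`, with `fₙ = fs 0`) and a
shift `u` with `fᵢ(g) = f_{i+1}(ug)` for `1 ≤ i ≤ n-1`, the function `fw fs` on `G ≀ ℤₙ` is
constant on each right coset of the cyclic subgroup generated by
`h = (u,…,u,u^{1-n},1)`, and takes distinct values on distinct right cosets. -/
theorem stmt8 {G S : Type*} [Group G] [Fintype G] (n : ℕ) (hn : 2 ≤ n)
    (fs : ZMod n → G → S) (hinj : ∀ i, Function.Injective (fs i)) (u : G)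
    (hshift : ∀ i : ZMod n, i ≠ 0 → ∀ g, fs i g = fs (i + 1) (u * g)) :
    (∀ (x : (ZMod n → G) × ZMod n) (m : ℕ),
        fw fs (wmuln (wpow (helt n u) m) x) = fw fs x) ∧
    (∀ x y : (ZMod n → G) × ZMod n,
        fw fs x = fw fs y → ∃ m : ℕ, y = wmuln (wpow (helt n u) m) x) :=
  stmt8_general n hn fs hinj u hshift
end

section
/- Let G act on a set Γ, and let φ₀, φ₁ ∈ Γ. If there is no u ∈ G with u·φ₁ = φ₀, then H = Stab_G(φ₀) × Stab_G(φ₁) × {0} is a subgroup of G ≀ ℤ₂, and the function f : G ≀ ℤ₂ → Γ × Γ defined by f(g₁,g₂,0) = (g₁·φ₀, g₂·φ₁) and f(g₁,g₂,1) = (g₂·φ₁, g₁·φ₀) is constant on left cosets of H and distinct on distinct left cosets of H. -/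
/-- The function `f : G ≀ ℤ₂ → Γ × Γ` with `f(g₁,g₂,0) = (g₁·φ₀, g₂·φ₁)` and
`f(g₁,g₂,1) = (g₂·φ₁, g₁·φ₀)`. -/
def hidea {G Γ : Type*} [Group G] [MulAction G Γ] (φ₀ φ₁ : Γ) (x : G × G × ZMod 2) : Γ × Γ :=
  if x.2.2 = 0 then (x.1 • φ₀, x.2.1 • φ₁) else (x.2.1 • φ₁, x.1 • φ₀)

/-- The set `Stab_G(φ₀) × Stab_G(φ₁) × {0}` inside `G ≀ ℤ₂`. -/
def stabSet {G Γ : Type*} [Group G] [MulAction G Γ] (φ₀ φ₁ : Γ) : Set (G × G × ZMod 2) :=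
  {x | x.2.2 = 0 ∧ x.1 • φ₀ = φ₀ ∧ x.2.1 • φ₁ = φ₁}


/-! Both `f x = f y` and `x⁻¹ y ∈ H` amount to: `x` and `y` have the same `ℤ₂`-coordinate and
their `G`-coordinates agree modulo the stabilizers of `φ₀` and `φ₁`. For different
`ℤ₂`-coordinates, `f x = f y` would give `g • φ₀ = g' • φ₁`, which disjointness of the orbits
forbids. -/

section WreathProduct

variable {G Γ : Type*} [Group G] [MulAction G Γ] {φ₀ φ₁ : Γ}

lemma ZMod.two_eq_zero_or_eq_one : ∀ s : ZMod 2, s = 0 ∨ s = 1 := by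
  decide

lemma inv_mul_smul_eq_self_iff (a c : G) (p : Γ) : (a⁻¹ * c) • p = p ↔ a • p = c • p := by
  rw [mul_smul, inv_smul_eq_iff, eq_comm]

lemma one_mem_stabSet : ((1, 1, 0) : G × G × ZMod 2) ∈ stabSet φ₀ φ₁ :=
  ⟨rfl, one_smul _ _, one_smul _ _⟩

lemma wmul_mem_stabSet {x y : G × G × ZMod 2} (hx : x ∈ stabSet φ₀ φ₁)
    (hy : y ∈ stabSet φ₀ φ₁) : wmul x y ∈ stabSet φ₀ φ₁ := by
  obtain ⟨hx₂, hx₀, hx₁⟩ := hx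
  obtain ⟨hy₂, hy₀, hy₁⟩ := hy
  simp only [stabSet, wmul, hy₂, if_true, Set.mem_ofPred_eq, hx₂, add_zero, mul_smul, hx₀, hx₁,
    hy₀, hy₁, and_self]

lemma winv_mem_stabSet {x : G × G × ZMod 2} (hx : x ∈ stabSet φ₀ φ₁) :
    winv x ∈ stabSet φ₀ φ₁ := by
  obtain ⟨hx₂, hx₀, hx₁⟩ := hx
  simp only [stabSet, winv, hx₂, if_true, Set.mem_ofPred_eq, neg_zero, inv_smul_eq_iff, hx₀, hx₁,
    and_self]

lemma wmul_winv_mem_stabSet_iff (x y : G × G × ZMod 2) :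
    wmul (winv x) y ∈ stabSet φ₀ φ₁ ↔
      x.2.2 = y.2.2 ∧ x.1 • φ₀ = y.1 • φ₀ ∧ x.2.1 • φ₁ = y.2.1 • φ₁ := by
  obtain ⟨a, b, s⟩ := x
  obtain ⟨c, d, t⟩ := y
  rcases ZMod.two_eq_zero_or_eq_one s with rfl | rfl <;>
    rcases ZMod.two_eq_zero_or_eq_one t with rfl | rfl <;>
    simp [stabSet, wmul, winv, inv_mul_smul_eq_self_iff, CharTwo.add_self_eq_zero]

lemma smul_ne_smul_of_not_exists_smul_eq (hdisj : ¬∃ u : G, u • φ₁ = φ₀) (a d : G) :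
    a • φ₀ ≠ d • φ₁ :=
  fun h => hdisj ⟨a⁻¹ * d, by rw [mul_smul, ← h, inv_smul_smul]⟩

lemma hidea_eq_hidea_iff (hdisj : ¬∃ u : G, u • φ₁ = φ₀) (x y : G × G × ZMod 2) :
    hidea φ₀ φ₁ x = hidea φ₀ φ₁ y ↔
      x.2.2 = y.2.2 ∧ x.1 • φ₀ = y.1 • φ₀ ∧ x.2.1 • φ₁ = y.2.1 • φ₁ := by
  obtain ⟨a, b, s⟩ := x
  obtain ⟨c, d, t⟩ := y
  rcases ZMod.two_eq_zero_or_eq_one s with rfl | rfl <;>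
    rcases ZMod.two_eq_zero_or_eq_one t with rfl | rfl <;>
    simp [hidea, and_comm, smul_ne_smul_of_not_exists_smul_eq hdisj]

end WreathProduct

theorem stmt10_general {G Γ : Type*} [Group G] [MulAction G Γ] (φ₀ φ₁ : Γ)
    (hdisj : ¬∃ u : G, u • φ₁ = φ₀) :
    (((1, 1, 0) : G × G × ZMod 2) ∈ stabSet φ₀ φ₁ ∧
      (∀ x ∈ stabSet φ₀ φ₁, ∀ y ∈ stabSet φ₀ φ₁, wmul x y ∈ stabSet (G := G) φ₀ φ₁) ∧
      (∀ x ∈ stabSet φ₀ φ₁, winv x ∈ stabSet (G := G) φ₀ φ₁)) ∧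
    (∀ x y : G × G × ZMod 2,
      hidea φ₀ φ₁ x = hidea φ₀ φ₁ y ↔ wmul (winv x) y ∈ stabSet φ₀ φ₁) :=
  ⟨⟨one_mem_stabSet, fun _ hx _ hy => wmul_mem_stabSet hx hy, fun _ hx => winv_mem_stabSet hx⟩,
    fun x y => (hidea_eq_hidea_iff hdisj x y).trans (wmul_winv_mem_stabSet_iff x y).symm⟩

/-- If no `u ∈ G` sends `φ₁` to `φ₀`, then
`H = Stab_G(φ₀) × Stab_G(φ₁) × {0}` is a subgroup of `G ≀ ℤ₂` and the function `hidea φ₀ φ₁`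
is constant on left cosets of `H` and distinct on distinct left cosets
(`f x = f y ↔ x⁻¹y ∈ H`). -/
theorem stmt10 {G Γ : Type*} [Group G] [Fintype G] [MulAction G Γ] (φ₀ φ₁ : Γ)
    (hdisj : ¬∃ u : G, u • φ₁ = φ₀) :
    (((1, 1, 0) : G × G × ZMod 2) ∈ stabSet φ₀ φ₁ ∧
      (∀ x ∈ stabSet φ₀ φ₁, ∀ y ∈ stabSet φ₀ φ₁, wmul x y ∈ stabSet (G := G) φ₀ φ₁) ∧
      (∀ x ∈ stabSet φ₀ φ₁, winv x ∈ stabSet (G := G) φ₀ φ₁)) ∧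
    (∀ x y : G × G × ZMod 2,
      hidea φ₀ φ₁ x = hidea φ₀ φ₁ y ↔ wmul (winv x) y ∈ stabSet φ₀ φ₁) :=
  stmt10_general φ₀ φ₁ hdisj
end
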